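/- Consider the LTV error recursion Δx_{k+1} ∈ {A_k Δx_k + B_k Δu_k} ⊕ Σ_k·B_∞ with Δu_k = ψᵘ_k + Σ_{j<k} K_{k,j}(Δx_j − ψˣ_j), where ψˣ, ψᵘ satisfy ψˣ_{k+1} = A_k ψˣ_k + B_k ψᵘ_k with ψˣ_0 = Δx_0. If the matrices Φˣ, Φᵘ satisfy Φˣ_{j+1,j} = Σ_j, Φˣ_{k+1,j} = A_k Φˣ_{k,j} + B_k Φᵘ_{k,j}, and Φᵘ_{k,j} = Σ_{i} K_{k,i} Φˣ_{i,j} appropriately, then for every admissible disturbance sequence, Δx_k ∈ {ψˣ_k} ⊕ ⊕_{j=0}^{k−1} Φˣ_{k,j}·B_∞ and Δu_k ∈ {ψᵘ_k} ⊕ ⊕_{j=0}^{k−1} Φᵘ_{k,j}·B_∞. -/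

import Mathlib

/-!
With the disturbance-feedback law, the realized error is an affine function of the past
disturbances: `Δx k = ψx k + ∑_{j<k} Φx k j w j` and `Δu k = ψu k + ∑_{j<k} Φu k j w j`.
The input formula follows from the state formulas at earlier times by exchanging the order
of the double sum `∑_{i<k} ∑_{j<i} = ∑_{j<k} ∑_{j<i<k}`, which is exactly how `Φu` is built
from `Φx`; the state formula at `k + 1` then follows from both at `k` by the response
recursion for `Φx`. Hence `d = w` witnesses the tube membership.
-/

open Matrix Finset

theorem sum_range_mulVec_sum_range {R ι κ ν : Type*} [NonUnitalSemiring R] [Fintype ι]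
    [Fintype ν] (K : ℕ → Matrix κ ι R) (Φ : ℕ → ℕ → Matrix ι ν R) (w : ℕ → ν → R) (k : ℕ) :
    ∑ i ∈ range k, K i *ᵥ ∑ j ∈ range i, Φ i j *ᵥ w j =
      ∑ j ∈ range k, (∑ i ∈ Ioo j k, K i * Φ i j) *ᵥ w j := by
  simp only [mulVec_sum, sum_mulVec, mulVec_mulVec]
  exact sum_comm' fun i j => by simp only [mem_range, mem_Ioo]; omega

section DisturbanceFeedback

variable {R ι κ : Type*} [Ring R] [Fintype ι]
  {A : ℕ → Matrix ι ι R} {B : ℕ → Matrix ι κ R} {Sig : ℕ → Matrix ι ι R}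
  {K : ℕ → ℕ → Matrix κ ι R} {ψx : ℕ → ι → R} {ψu : ℕ → κ → R}
  {Φx : ℕ → ℕ → Matrix ι ι R} {Φu : ℕ → ℕ → Matrix κ ι R}
  {w Δx : ℕ → ι → R} {Δu : ℕ → κ → R}

theorem input_eq_response_of_state_eq {k : ℕ}
    (hΔu : Δu k = ψu k + ∑ i ∈ range k, K k i *ᵥ (Δx i - ψx i))
    (hΦu : ∀ j < k, Φu k j = ∑ i ∈ Ioo j k, K k i * Φx i j)
    (hΔx : ∀ i < k, Δx i = ψx i + ∑ j ∈ range i, Φx i j *ᵥ w j) :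
    Δu k = ψu k + ∑ j ∈ range k, Φu k j *ᵥ w j := by
  have hdev : ∀ i ∈ range k, Δx i - ψx i = ∑ j ∈ range i, Φx i j *ᵥ w j := fun i hi => by
    rw [hΔx i (mem_range.mp hi), add_sub_cancel_left]
  rw [hΔu, sum_congr rfl fun i hi => congrArg (K k i *ᵥ ·) (hdev i hi),
    sum_range_mulVec_sum_range]
  exact congrArg (ψu k + ·) <| sum_congr rfl fun j hj => by rw [hΦu j (mem_range.mp hj)]

theorem state_succ_eq_response [Fintype κ] {k : ℕ}
    (hψ : ψx (k + 1) = A k *ᵥ ψx k + B k *ᵥ ψu k)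
    (hΔx : Δx (k + 1) = A k *ᵥ Δx k + B k *ᵥ Δu k + Sig k *ᵥ w k)
    (hΦdiag : Φx (k + 1) k = Sig k)
    (hΦrec : ∀ j < k, Φx (k + 1) j = A k * Φx k j + B k * Φu k j)
    (hx : Δx k = ψx k + ∑ j ∈ range k, Φx k j *ᵥ w j)
    (hu : Δu k = ψu k + ∑ j ∈ range k, Φu k j *ᵥ w j) :
    Δx (k + 1) = ψx (k + 1) + ∑ j ∈ range (k + 1), Φx (k + 1) j *ᵥ w j := by
  have hstep : ∀ j ∈ range k,
      Φx (k + 1) j *ᵥ w j = A k *ᵥ Φx k j *ᵥ w j + B k *ᵥ Φu k j *ᵥ w j := fun j hj => by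
    rw [hΦrec j (mem_range.mp hj), add_mulVec, mulVec_mulVec, mulVec_mulVec]
  rw [hΔx, hx, hu, hψ, sum_range_succ, hΦdiag, sum_congr rfl hstep, sum_add_distrib,
    mulVec_add, mulVec_add, mulVec_sum, mulVec_sum]
  abel

theorem state_eq_response [Fintype κ]
    (hψ : ∀ k, ψx (k + 1) = A k *ᵥ ψx k + B k *ᵥ ψu k)
    (hΔu : ∀ k, Δu k = ψu k + ∑ i ∈ range k, K k i *ᵥ (Δx i - ψx i))
    (hΔx0 : Δx 0 = ψx 0)
    (hΔx : ∀ k, Δx (k + 1) = A k *ᵥ Δx k + B k *ᵥ Δu k + Sig k *ᵥ w k)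
    (hΦdiag : ∀ k, Φx (k + 1) k = Sig k)
    (hΦrec : ∀ j k, j < k → Φx (k + 1) j = A k * Φx k j + B k * Φu k j)
    (hΦu : ∀ j k, j < k → Φu k j = ∑ i ∈ Ioo j k, K k i * Φx i j) (k : ℕ) :
    Δx k = ψx k + ∑ j ∈ range k, Φx k j *ᵥ w j := by
  induction k using Nat.strong_induction_on with
  | _ k ih =>
    cases k with
    | zero => simpa using hΔx0
    | succ k =>
      refine state_succ_eq_response (hψ k) (hΔx k) (hΦdiag k) (fun j hj => hΦrec j k hj)
        (ih k k.lt_succ_self) ?_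
      exact input_eq_response_of_state_eq (hΔu k) (fun j hj => hΦu j k hj)
        fun i hi => ih i (hi.trans k.lt_succ_self)

end DisturbanceFeedback

/-- System-level parameterization of the LTV error recursion with disturbance
feedback: the error state and input lie in the tubes generated by the system
responses `Φˣ`, `Φᵘ`. -/
theorem sls_reachable_tube
    {n m : ℕ}
    (A : ℕ → Matrix (Fin n) (Fin n) ℝ) (B : ℕ → Matrix (Fin n) (Fin m) ℝ)
    (Sig : ℕ → Matrix (Fin n) (Fin n) ℝ)
    (K : ℕ → ℕ → Matrix (Fin m) (Fin n) ℝ)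
    (ψx : ℕ → Fin n → ℝ) (ψu : ℕ → Fin m → ℝ)
    (Φx : ℕ → ℕ → Matrix (Fin n) (Fin n) ℝ)
    (Φu : ℕ → ℕ → Matrix (Fin m) (Fin n) ℝ)
    (w : ℕ → Fin n → ℝ) (Δx : ℕ → Fin n → ℝ) (Δu : ℕ → Fin m → ℝ)
    -- admissible disturbances
    (hw : ∀ k, ‖w k‖ ≤ 1)
    -- auxiliary nominal error dynamics
    (hψ : ∀ k, ψx (k + 1) = (A k).mulVec (ψx k) + (B k).mulVec (ψu k))
    -- disturbance feedback control law
    (hΔu : ∀ k, Δu k = ψu k + ∑ j ∈ range k, (K k j).mulVec (Δx j - ψx j))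
    -- true error dynamics, with uncertainty realization Σ_k w_k
    (hΔx0 : Δx 0 = ψx 0)
    (hΔx : ∀ k, Δx (k + 1) =
      (A k).mulVec (Δx k) + (B k).mulVec (Δu k) + (Sig k).mulVec (w k))
    -- system response recursion
    (hΦdiag : ∀ j, Φx (j + 1) j = Sig j)
    (hΦrec : ∀ j k, j < k →
      Φx (k + 1) j = A k * Φx k j + B k * Φu k j)
    (hΦu : ∀ j k, j < k →
      Φu k j = ∑ i ∈ Ioo j k, K k i * Φx i j) :
    ∀ k, ∃ d : ℕ → Fin n → ℝ, (∀ j, ‖d j‖ ≤ 1) ∧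
      Δx k = ψx k + ∑ j ∈ range k, (Φx k j).mulVec (d j) ∧
      Δu k = ψu k + ∑ j ∈ range k, (Φu k j).mulVec (d j) := by
  have hstate := state_eq_response hψ hΔu hΔx0 hΔx hΦdiag hΦrec hΦu
  exact fun k => ⟨w, hw, hstate k,
    input_eq_response_of_state_eq (hΔu k) (fun j hj => hΦu j k hj) fun i _ => hstate i⟩
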